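/- The logic G3, axiomatised as propositional intuitionistic logic plus Dummett's linearity axiom (x→y)∨(y→x) and the height-2 Peirce axiom ((x→(((y→z)→y)→y))→x)→x, is sound and complete for the two-world semantics: G3 ⊢ A if and only if t ⊨_h A for every assignment h. -/

import Mathlib

/-- Propositional intuitionistic formulas over atoms `α`
(connectives ∧, ∨, →, ¬, ⊥, ⊤). -/
inductive Form (α : Type) where
  | atom : α → Form α
  | top : Form α
  | bot : Form α
  | and : Form α → Form α → Form α
  | or : Form α → Form α → Form α
  | imp : Form α → Form α → Form α
  | neg : Form α → Form α

/-- Forcing in the two-world Kripke model: world `false` is `t`, world `true`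
is `s`, with `t < s` (the Bool order). -/
def force {α : Type} (h : α → Bool × Bool) : Bool → Form α → Prop
  | w, .atom x => (if w then (h x).2 else (h x).1) = true
  | _, .top => True
  | _, .bot => False
  | w, .and A B => force h w A ∧ force h w B
  | w, .or A B => force h w A ∨ force h w B
  | w, .imp A B => ∀ v : Bool, w ≤ v → force h v A → force h v B
  | w, .neg A => ∀ v : Bool, w ≤ v → ¬ force h v A

/-- An assignment is legitimate when no atom gets the forbidden value `(⊤,⊥)`. -/
def Persistent {α : Type} (h : α → Bool × Bool) : Prop :=
  ∀ x, (h x).1 = true → (h x).2 = true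

/-- The Hilbert system G3: propositional intuitionistic logic plus Dummett's
linearity axiom `(x→y)∨(y→x)` and the height-2 Peirce axiom
`((x→(((y→z)→y)→y))→x)→x`, closed under modus ponens. -/
inductive Prov {α : Type} : Form α → Prop
  | mp {A B : Form α} : Prov (.imp A B) → Prov A → Prov B
  | axK {A B : Form α} : Prov (.imp A (.imp B A))
  | axS {A B C : Form α} :
      Prov (.imp (.imp A (.imp B C)) (.imp (.imp A B) (.imp A C)))
  | andIntro {A B : Form α} : Prov (.imp A (.imp B (.and A B)))
  | andElimL {A B : Form α} : Prov (.imp (.and A B) A)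
  | andElimR {A B : Form α} : Prov (.imp (.and A B) B)
  | orIntroL {A B : Form α} : Prov (.imp A (.or A B))
  | orIntroR {A B : Form α} : Prov (.imp B (.or A B))
  | orElim {A B C : Form α} :
      Prov (.imp (.imp A C) (.imp (.imp B C) (.imp (.or A B) C)))
  | exFalso {A : Form α} : Prov (.imp .bot A)
  | trueIntro : Prov (.top : Form α)
  | negElim {A : Form α} : Prov (.imp (.neg A) (.imp A .bot))
  | negIntro {A : Form α} : Prov (.imp (.imp A .bot) (.neg A))
  | dummett {A B : Form α} : Prov (.or (.imp A B) (.imp B A))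
  | peirce2 {A B C : Form α} :
      Prov (.imp (.imp (.imp A (.imp (.imp (.imp B C) B) B)) A) A)

/-!
The proof goes through the three-element Heyting chain `Fin 3 = {⊥ < 1 < ⊤}`, which is the algebra
of up-sets of the frame `t < s` (`⊥ = ∅`, `1 = {s}`, `⊤ = {t, s}`): an assignment is the same as a
valuation in `Fin 3`, and `t ⊨ A` iff `A` takes the value `⊤`.

Soundness: every Heyting algebra validates the intuitionistic axioms, and the chain `Fin 3` also
validates linearity and height-2 Peirce.

Completeness: given a pivot `p` with `⊢ ¬¬p`, linearity gives `¬x ∨ ¬¬x` and height-2 Peirce gives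
`x ∨ (x → p)` and, under `¬¬x`, `p ∨ (p → x)`. Splitting on these for every atom `x` of `A`, each
branch either fixes the value of `x` (`⊥`, `⊤`, or `1`, represented by `x ↔ p`) or proves `p`, in
which case `x` becomes the new pivot. Once every atom is fixed, every subformula provably realizes
its value; as `A` has value `⊤` under every valuation, `A` is derived in every branch.
-/

namespace Form

variable {α : Type}

def eval {H : Type*} [HeytingAlgebra H] (v : α → H) : Form α → H
  | atom x => v x
  | top => ⊤
  | bot => ⊥
  | and A B => eval v A ⊓ eval v B
  | or A B => eval v A ⊔ eval v B
  | imp A B => eval v A ⇨ eval v B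
  | neg A => (eval v A)ᶜ

def atoms : Form α → List α
  | atom x => [x]
  | top | bot => []
  | and A B | or A B | imp A B => A.atoms ++ B.atoms
  | neg A => A.atoms

end Form

theorem Prov.eval_eq_top {α : Type} {H : Type*} [HeytingAlgebra H]
    (linear : ∀ a b : H, (a ⇨ b) ⊔ (b ⇨ a) = ⊤)
    (peirce : ∀ a b c : H, ((a ⇨ ((b ⇨ c) ⇨ b) ⇨ b) ⇨ a) ⇨ a = ⊤)
    {A : Form α} (hA : Prov A) (v : α → H) : A.eval v = ⊤ := by
  induction hA with
  | mp _ _ ihAB ihA => rwa [Form.eval, ihA, top_himp] at ihAB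
  | axS =>
    simp only [Form.eval, himp_eq_top_iff, himp_himp]
    exact le_himp_iff.1 (himp_le_himp_right (le_inf inf_le_right himp_inf_le))
  | orElim => simp [Form.eval, himp_himp, ← inf_assoc, ← sup_himp_distrib]
  | dummett => exact linear _ _
  | peirce2 => exact peirce _ _ _
  | _ => simp [Form.eval, himp_himp]

namespace TwoWorld

variable {α : Type}

def toFin3 (b : Bool × Bool) : Fin 3 :=
  if b.1 then 2 else if b.2 then 1 else 0

def ofFin3 (a : Fin 3) : Bool × Bool :=
  (a = 2, a ≠ 0)

theorem toFin3_ofFin3 (a : Fin 3) : toFin3 (ofFin3 a) = a := by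
  revert a; decide

theorem persistent_ofFin3_comp (v : α → Fin 3) : Persistent (ofFin3 ∘ v) := fun x => by
  simp only [Function.comp_apply, ofFin3]
  generalize v x = a
  revert a; decide

theorem force_iff_eval {h : α → Bool × Bool} (hp : Persistent h) (A : Form α) :
    (force h false A ↔ A.eval (toFin3 ∘ h) = ⊤) ∧ (force h true A ↔ A.eval (toFin3 ∘ h) ≠ ⊥) := by
  induction A with
  | atom x =>
    simp only [force, Form.eval, Function.comp_apply, toFin3]
    have hx := hp x
    revert hx
    cases (h x).1 <;> cases (h x).2 <;> decide
  | top | bot => simp [force, Form.eval]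
  | and A B ihA ihB | or A B ihA ihB | imp A B ihA ihB =>
    simp only [force, Form.eval, Bool.forall_bool, ihA.1, ihA.2, ihB.1, ihB.2]
    generalize A.eval (toFin3 ∘ h) = a
    generalize B.eval (toFin3 ∘ h) = b
    revert a b
    decide
  | neg A ihA =>
    simp only [force, Form.eval, Bool.forall_bool, ihA.1, ihA.2]
    generalize A.eval (toFin3 ∘ h) = a
    revert a
    decide

theorem forall_force_iff_forall_eval (A : Form α) :
    (∀ h : α → Bool × Bool, Persistent h → force h false A) ↔ ∀ v : α → Fin 3, A.eval v = ⊤ := by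
  refine ⟨fun hA v => ?_, fun hA h hp => (force_iff_eval hp A).1.2 (hA _)⟩
  have hv : toFin3 ∘ ofFin3 ∘ v = v := funext fun x => toFin3_ofFin3 (v x)
  have hp := persistent_ofFin3_comp v
  simpa only [← Function.comp_assoc, hv] using (force_iff_eval hp A).1.1 (hA _ hp)

end TwoWorld

theorem Prov.imp_self {α : Type} (A : Form α) : Prov (A.imp A) :=
  .mp (.mp .axS (.axK (B := A.imp A))) (.axK (B := A))

inductive Deriv {α : Type} (Γ : List (Form α)) : Form α → Prop
  | hyp {A : Form α} : A ∈ Γ → Deriv Γ A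
  | ax {A : Form α} : Prov A → Deriv Γ A
  | mp {A B : Form α} : Deriv Γ (.imp A B) → Deriv Γ A → Deriv Γ B

namespace Deriv

variable {α : Type} {Γ Δ : List (Form α)} {A B C p : Form α}

theorem mono (h : Deriv Γ A) (hΓ : Γ ⊆ Δ) : Deriv Δ A := by
  induction h with
  | hyp hA => exact hyp (hΓ hA)
  | ax hA => exact ax hA
  | mp _ _ ihAB ihA => exact mp ihAB ihA

theorem cons (h : Deriv Γ A) : Deriv (B :: Γ) A :=
  h.mono (List.subset_cons_self _ _)

theorem head : Deriv (A :: Γ) A :=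
  hyp List.mem_cons_self

theorem imp_intro (h : Deriv (A :: Γ) B) : Deriv Γ (A.imp B) := by
  induction h with
  | hyp hC =>
    rcases List.mem_cons.1 hC with rfl | hC
    · exact ax (Prov.imp_self _)
    · exact mp (ax .axK) (hyp hC)
  | ax hC => exact mp (ax .axK) (ax hC)
  | mp _ _ ihAB ihA => exact mp (mp (ax .axS) ihAB) ihA

theorem toProv (h : Deriv [] A) : Prov A := by
  induction h with
  | hyp hA => cases hA
  | ax hA => exact hA
  | mp _ _ ihAB ihA => exact .mp ihAB ihA

theorem imp_trans (hAB : Deriv Γ (A.imp B)) (hBC : Deriv Γ (B.imp C)) : Deriv Γ (A.imp C) :=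
  imp_intro (mp hBC.cons (mp hAB.cons head))

theorem and_intro (hA : Deriv Γ A) (hB : Deriv Γ B) : Deriv Γ (A.and B) :=
  mp (mp (ax .andIntro) hA) hB

theorem or_inl (hA : Deriv Γ A) : Deriv Γ (A.or B) :=
  mp (ax .orIntroL) hA

theorem or_inr (hB : Deriv Γ B) : Deriv Γ (A.or B) :=
  mp (ax .orIntroR) hB

theorem or_elim (h : Deriv Γ (A.or B)) (hA : Deriv (A :: Γ) C) (hB : Deriv (B :: Γ) C) :
    Deriv Γ C :=
  mp (mp (mp (ax .orElim) (imp_intro hA)) (imp_intro hB)) h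

theorem exfalso (h : Deriv Γ .bot) : Deriv Γ A :=
  mp (ax .exFalso) h

theorem neg_elim (hn : Deriv Γ A.neg) (h : Deriv Γ A) : Deriv Γ .bot :=
  mp (mp (ax .negElim) hn) h

theorem neg_intro (h : Deriv (A :: Γ) .bot) : Deriv Γ A.neg :=
  mp (ax .negIntro) (imp_intro h)

theorem mt (hAB : Deriv Γ (A.imp B)) (hB : Deriv Γ B.neg) : Deriv Γ A.neg :=
  neg_intro (neg_elim hB.cons (mp hAB.cons head))

theorem not_not_intro (h : Deriv Γ A) : Deriv Γ A.neg.neg :=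
  neg_intro (neg_elim head h.cons)

theorem not_not_mp (hAB : Deriv Γ (A.imp B)) (hA : Deriv Γ A.neg.neg) : Deriv Γ B.neg.neg :=
  mt (imp_intro (mt hAB.cons head)) hA

theorem neg_or_not_not (A : Form α) : Deriv Γ (A.neg.or A.neg.neg) :=
  or_elim (ax (.dummett (A := A) (B := A.neg)))
    (or_inl (neg_intro (neg_elim (mp head.cons head) head)))
    (or_inr (neg_intro (neg_elim head (mp head.cons head))))

-- The instance `x := A ∨ (A → P)` of the height-2 Peirce axiom, with `P := ((B → C) → B) → B`.
theorem or_imp_peirce (A B C : Form α) :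
    Deriv Γ (A.or (A.imp (((B.imp C).imp B).imp B))) :=
  mp (ax .peirce2) (imp_intro (or_inr (imp_intro (mp head.cons (or_inl head)))))

theorem or_imp_of_not_not (A : Form α) (hp : Deriv Γ p.neg.neg) : Deriv Γ (A.or (A.imp p)) := by
  have hP : Deriv Γ ((((p.imp .bot).imp p).imp p).imp p) :=
    imp_intro <| mp head <| imp_intro <| exfalso <|
      neg_elim hp.cons.cons (neg_intro (mp head.cons head))
  exact or_elim (or_imp_peirce A p .bot) (or_inl head) (or_inr (imp_trans head hP.cons))

end Deriv

section Realizes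

variable {α : Type}

-- What `Γ` proves about `A` when `A` has truth value `a`; the middle value is represented by
-- equivalence with the pivot `p`.
def Realizes (Γ : List (Form α)) (p A : Form α) : Fin 3 → Prop
  | 0 => Deriv Γ A.neg
  | 1 => Deriv Γ (A.imp p) ∧ Deriv Γ (p.imp A)
  | 2 => Deriv Γ A

variable {Γ Δ : List (Form α)} {p A B : Form α}

open Deriv

theorem Realizes.mono : ∀ {a : Fin 3}, Realizes Γ p A a → Γ ⊆ Δ → Realizes Δ p A a
  | 0, h, hΓ => Deriv.mono h hΓ
  | 1, h, hΓ => ⟨h.1.mono hΓ, h.2.mono hΓ⟩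
  | 2, h, hΓ => Deriv.mono h hΓ

theorem Realizes.of_equiv (hAB : Deriv Γ (A.imp B)) (hBA : Deriv Γ (B.imp A)) :
    ∀ {a : Fin 3}, Realizes Γ p A a → Realizes Γ p B a
  | 0, h => mt hBA h
  | 1, h => ⟨imp_trans hBA h.1, imp_trans h.2 hAB⟩
  | 2, h => mp hAB h

-- In `Fin 3`, `aᶜᶜ` sends `1` to `⊤` and fixes `⊥` and `⊤`.
theorem Realizes.compl_compl_of_deriv (hp : Deriv Γ p) (q : Form α) :
    ∀ {a : Fin 3}, Realizes Γ p A a → Realizes Γ q A aᶜᶜ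
  | 0, h => h
  | 1, h => mp h.2 hp
  | 2, h => h

theorem Realizes.top : Realizes Γ p .top ⊤ :=
  ax .trueIntro

theorem Realizes.bot : Realizes Γ p .bot ⊥ :=
  neg_intro head

theorem Realizes.and : ∀ {a b : Fin 3}, Realizes Γ p A a → Realizes Γ p B b →
    Realizes Γ p (A.and B) (a ⊓ b)
  | 0, _, hA, _ => mt (ax .andElimL) hA
  | 1, 0, _, hB | 2, 0, _, hB => mt (ax .andElimR) hB
  | 1, 1, hA, hB =>
    ⟨imp_trans (ax .andElimL) hA.1, imp_intro (and_intro (mp hA.2.cons head) (mp hB.2.cons head))⟩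
  | 1, 2, hA, hB =>
    ⟨imp_trans (ax .andElimL) hA.1, imp_intro (and_intro (mp hA.2.cons head) hB.cons)⟩
  | 2, 1, hA, hB =>
    ⟨imp_trans (ax .andElimR) hB.1, imp_intro (and_intro hA.cons (mp hB.2.cons head))⟩
  | 2, 2, hA, hB => and_intro hA hB

theorem Realizes.or : ∀ {a b : Fin 3}, Realizes Γ p A a → Realizes Γ p B b →
    Realizes Γ p (A.or B) (a ⊔ b)
  | 2, 0, hA, _ | 2, 1, hA, _ | 2, 2, hA, _ => or_inl hA
  | 0, 2, _, hB | 1, 2, _, hB => or_inr hB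
  | 0, 0, hA, hB =>
    neg_intro (or_elim head (neg_elim hA.cons.cons head) (neg_elim hB.cons.cons head))
  | 0, 1, hA, hB =>
    ⟨imp_intro (or_elim head (exfalso (neg_elim hA.cons.cons head)) (mp hB.1.cons.cons head)),
      imp_trans hB.2 (ax .orIntroR)⟩
  | 1, 0, hA, hB =>
    ⟨imp_intro (or_elim head (mp hA.1.cons.cons head) (exfalso (neg_elim hB.cons.cons head))),
      imp_trans hA.2 (ax .orIntroL)⟩
  | 1, 1, hA, hB =>
    ⟨imp_intro (or_elim head (mp hA.1.cons.cons head) (mp hB.1.cons.cons head)),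
      imp_trans hA.2 (ax .orIntroL)⟩

theorem Realizes.imp (hp : Deriv Γ p.neg.neg) : ∀ {a b : Fin 3}, Realizes Γ p A a →
    Realizes Γ p B b → Realizes Γ p (A.imp B) (a ⇨ b)
  | 0, _, hA, _ => imp_intro (exfalso (neg_elim hA.cons head))
  | 1, 2, _, hB | 2, 2, _, hB => imp_intro hB.cons
  | 1, 0, hA, hB => neg_intro (neg_elim (not_not_mp hA.2 hp).cons (mt head hB.cons))
  | 1, 1, hA, hB => imp_trans hA.1 hB.2
  | 2, 0, hA, hB => neg_intro (neg_elim hB.cons (mp head hA.cons))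
  | 2, 1, hA, hB => ⟨imp_intro (mp hB.1.cons (mp head hA.cons)), imp_trans hB.2 (ax .axK)⟩

theorem Realizes.neg (hp : Deriv Γ p.neg.neg) {a : Fin 3} (hA : Realizes Γ p A a) :
    Realizes Γ p A.neg aᶜ := by
  rw [← himp_bot]
  exact (hA.imp hp Realizes.bot).of_equiv (ax .negIntro) (ax .negElim)

end Realizes

section Completeness

variable {α : Type} {Γ : List (Form α)} {p : Form α}

open Deriv

theorem realizes_eval (hp : Deriv Γ p.neg.neg) (v : α → Fin 3) :
    ∀ A : Form α, (∀ x ∈ A.atoms, Realizes Γ p (.atom x) (v x)) → Realizes Γ p A (A.eval v)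
  | .atom x, h => h x (List.mem_singleton_self x)
  | .top, _ => .top
  | .bot, _ => .bot
  | .and A B, h => .and (realizes_eval hp v A fun x hx => h x (List.mem_append_left _ hx))
      (realizes_eval hp v B fun x hx => h x (List.mem_append_right _ hx))
  | .or A B, h => .or (realizes_eval hp v A fun x hx => h x (List.mem_append_left _ hx))
      (realizes_eval hp v B fun x hx => h x (List.mem_append_right _ hx))
  | .imp A B, h => .imp hp (realizes_eval hp v A fun x hx => h x (List.mem_append_left _ hx))
      (realizes_eval hp v B fun x hx => h x (List.mem_append_right _ hx))
  | .neg A, h => .neg hp (realizes_eval hp v A h)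

theorem realizes_update [DecidableEq α] {S L : List α} {Δ : List (Form α)} {v : α → Fin 3}
    {x : α} {a : Fin 3}
    (h : ∀ y ∈ S, y ∉ x :: L → Realizes Γ p (.atom y) (v y)) (hΓ : Γ ⊆ Δ)
    (hx : Realizes Δ p (.atom x) a) :
    ∀ y ∈ S, y ∉ L → Realizes Δ p (.atom y) (Function.update v x a y) := by
  intro y hy hyL
  by_cases hyx : y = x
  · subst hyx; simpa using hx
  · simpa [hyx] using (h y hy (by simp [hyx, hyL])).mono hΓ

theorem deriv_of_forall_eval_eq_top [DecidableEq α] {A : Form α}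
    (hA : ∀ v : α → Fin 3, A.eval v = ⊤) :
    ∀ (L : List α) (Γ : List (Form α)) (p : Form α) (v : α → Fin 3), Deriv Γ p.neg.neg →
      (∀ x ∈ A.atoms, x ∉ L → Realizes Γ p (.atom x) (v x)) → Deriv Γ A
  | [], Γ, p, v, hp, h => by
    have hR := realizes_eval hp v A fun x hx => h x hx List.not_mem_nil
    rw [hA v] at hR
    exact hR
  | x :: L, Γ, p, v, hp, h => by
    have ih := deriv_of_forall_eval_eq_top hA L
    refine or_elim (neg_or_not_not (.atom x)) ?_ ?_
    · exact ih _ p _ hp.cons (realizes_update (a := 0) h (by grind) head)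
    refine or_elim (or_imp_of_not_not (.atom x) hp.cons) ?_ ?_
    · exact ih _ p _ hp.cons.cons (realizes_update (a := 2) h (by grind) head)
    refine or_elim (or_imp_of_not_not p head.cons) ?_ ?_
    · -- `p` is now provable: `x` becomes the pivot, and the atoms equivalent to `p` become true
      refine ih _ (.atom x) _ head.cons.cons (realizes_update (v := fun y => (v y)ᶜᶜ) (a := 1) ?_
        (List.Subset.refl _) ⟨ax (Prov.imp_self _), ax (Prov.imp_self _)⟩)
      exact fun y hy hyL => ((h y hy hyL).mono (by grind)).compl_compl_of_deriv head _
    · exact ih _ p _ hp.cons.cons.cons (realizes_update (a := 1) h (by grind) ⟨head.cons, head⟩)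

theorem Prov.of_forall_eval_eq_top {A : Form α} (hA : ∀ v : α → Fin 3, A.eval v = ⊤) :
    Prov A := by
  classical
  exact toProv <| deriv_of_forall_eval_eq_top hA A.atoms [] .top (fun _ => ⊥)
    (not_not_intro (ax .trueIntro)) fun _ hx hx' => (hx' hx).elim

end Completeness

/-- Soundness and completeness of G3 for the two-world semantics:
`G3 ⊢ A` iff `A` holds at the actual world `t` under every assignment. -/
theorem stmt13 {α : Type} (A : Form α) :
    Prov A ↔ ∀ h : α → Bool × Bool, Persistent h → force h false A := by
  rw [TwoWorld.forall_force_iff_forall_eval]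
  exact ⟨fun hA => hA.eval_eq_top (by decide) (by decide), Prov.of_forall_eval_eq_top⟩
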